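/- Let h : [0,∞) → ℝ be Lipschitz with Lipschitz constant ‖h'‖_∞, and f_h the standard solution of the half-normal Stein equation. Then for all x ≥ 0, |f_h(x)| ≤ ‖h'‖_∞ · (1 - sqrt(2/π)·(1-Φ(x))/φ(x)) ≤ ‖h'‖_∞. -/

import Mathlib

open MeasureTheory ProbabilityTheory Real

/-- Standard normal density. -/
noncomputable def stdPhi (x : ℝ) : ℝ := Real.exp (-x^2/2) / Real.sqrt (2*Real.pi)

/-- Standard normal distribution function. -/
noncomputable def stdCDF (x : ℝ) : ℝ := ∫ t in Set.Iic x, stdPhi t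

/-- `E[h(|Z|)]` for `Z` standard normal. -/
noncomputable def Ehn (h : ℝ → ℝ) : ℝ := ∫ z, h |z| ∂(gaussianReal 0 1)

/-- The standard solution of the half-normal Stein equation. -/
noncomputable def fh (h : ℝ → ℝ) (x : ℝ) : ℝ :=
  (stdPhi x)⁻¹ * ∫ t in (0:ℝ)..x, (h t - Ehn h) * stdPhi t


/-!
Since `E[h(|Z|)] = 2 ∫₀^∞ h φ`, the quantity
`f_h(x) φ(x) = ∫₀^x h φ - E[h(|Z|)] (Φ(x) - 1/2)` compares the `φ`-weighted mean of `h` over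
`(0, x]` with its mean over `(0, ∞)`. For a function monotone on `[0, ∞)` the mean over the
initial segment is the smaller one (a weighted Chebyshev inequality). If `h` is `L`-Lipschitz,
then `L t ± h t` is monotone, and with `∫₀^x t φ = φ(0) - φ(x)`, `∫₀^∞ t φ = φ(0)` and
`2 φ(0) = √(2/π)` this gives `± f_h(x) φ(x) ≤ L (φ(x) - √(2/π) (1 - Φ(x)))`.
-/

open Set Filter Topology

lemma stdPhi_eq_gaussianPDFReal : stdPhi = gaussianPDFReal 0 1 := by
  ext x
  simp [stdPhi, gaussianPDFReal, div_eq_inv_mul]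

lemma stdPhi_pos (x : ℝ) : 0 < stdPhi x := by
  unfold stdPhi
  positivity

lemma stdPhi_neg (x : ℝ) : stdPhi (-x) = stdPhi x := by
  simp [stdPhi]

@[fun_prop]
lemma continuous_stdPhi : Continuous stdPhi := by
  unfold stdPhi
  fun_prop

lemma integrable_stdPhi : Integrable stdPhi :=
  stdPhi_eq_gaussianPDFReal ▸ integrable_gaussianPDFReal 0 1

lemma integral_stdPhi : ∫ x, stdPhi x = 1 :=
  stdPhi_eq_gaussianPDFReal ▸ integral_gaussianPDFReal_eq_one 0 one_ne_zero

lemma hasDerivAt_stdPhi (x : ℝ) : HasDerivAt stdPhi (-(x * stdPhi x)) x := by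
  have hexp : HasDerivAt (fun u : ℝ => -u ^ 2 / 2) (-x) x :=
    ((hasDerivAt_pow 2 x).neg.div_const 2).congr_deriv (by ring)
  unfold stdPhi
  exact (hexp.exp.div_const (√(2 * π))).congr_deriv (by ring)

lemma tendsto_stdPhi_atTop : Tendsto stdPhi atTop (𝓝 0) := by
  have hexp : Tendsto (fun x : ℝ => -x ^ 2 / 2) atTop atBot :=
    (tendsto_neg_atBot_iff.mpr (tendsto_pow_atTop two_ne_zero)).atBot_div_const two_pos
  unfold stdPhi
  simpa using (tendsto_exp_atBot.comp hexp).div_const (√(2 * π))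

lemma integrable_mul_stdPhi : Integrable fun x => x * stdPhi x := by
  convert (integrable_mul_exp_neg_mul_sq (b := 1 / 2) (by norm_num)).div_const (√(2 * π))
    using 2 with x
  simp only [stdPhi]
  ring_nf

lemma integral_Ioi_mul_stdPhi : ∫ t in Ioi 0, t * stdPhi t = stdPhi 0 := by
  have := integral_Ioi_of_hasDerivAt_of_tendsto' (f := -stdPhi) (a := 0) (m := 0)
    (fun t _ => by simpa using (hasDerivAt_stdPhi t).neg) integrable_mul_stdPhi.integrableOn
    (by rw [← neg_zero]; exact tendsto_stdPhi_atTop.neg)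
  simpa using this

lemma intervalIntegral_mul_stdPhi (x : ℝ) :
    ∫ t in (0 : ℝ)..x, t * stdPhi t = stdPhi 0 - stdPhi x := by
  rw [intervalIntegral.integral_eq_sub_of_hasDerivAt (f := -stdPhi)
    (fun t _ => by simpa using (hasDerivAt_stdPhi t).neg)
    (Continuous.intervalIntegrable (by fun_prop) 0 x)]
  simp only [Pi.neg_apply]
  ring

lemma integral_Iic_stdPhi_eq_integral_Ioi :
    ∫ t in Iic 0, stdPhi t = ∫ t in Ioi 0, stdPhi t := by
  simpa [stdPhi_neg] using integral_comp_neg_Iic 0 stdPhi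

lemma integral_Ioi_stdPhi : ∫ t in Ioi 0, stdPhi t = 1 / 2 := by
  have htotal := intervalIntegral.integral_Iic_add_Ioi (b := 0)
    integrable_stdPhi.integrableOn integrable_stdPhi.integrableOn
  rw [integral_stdPhi, integral_Iic_stdPhi_eq_integral_Ioi] at htotal
  linarith

lemma intervalIntegral_stdPhi (x : ℝ) : ∫ t in (0 : ℝ)..x, stdPhi t = stdCDF x - 1 / 2 := by
  rw [← intervalIntegral.integral_Iic_sub_Iic integrable_stdPhi.integrableOn
    integrable_stdPhi.integrableOn, integral_Iic_stdPhi_eq_integral_Ioi, integral_Ioi_stdPhi,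
    stdCDF]

lemma stdCDF_le_one (x : ℝ) : stdCDF x ≤ 1 :=
  integral_stdPhi ▸ setIntegral_le_integral integrable_stdPhi
    (Eventually.of_forall fun t => (stdPhi_pos t).le)

lemma sqrt_two_div_pi_eq : √(2 / π) = 2 * stdPhi 0 := by
  have hφ0 : stdPhi 0 = (√(2 * π))⁻¹ := by simp [stdPhi]
  rw [hφ0, show 2 / π = 2 ^ 2 / (2 * π) by field_simp, sqrt_div' _ (by positivity),
    sqrt_sq zero_le_two, div_eq_mul_inv]

lemma Ehn_eq (h : ℝ → ℝ) : Ehn h = 2 * ∫ t in Ioi 0, h t * stdPhi t := by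
  rw [Ehn, integral_gaussianReal_eq_integral_smul one_ne_zero, ← stdPhi_eq_gaussianPDFReal,
    ← integral_comp_abs (f := fun t => h t * stdPhi t)]
  congr 1 with z
  rw [smul_eq_mul, mul_comm]
  rcases abs_choice z with hz | hz <;> simp [hz, stdPhi_neg]

lemma integral_Ioc_mul_le_of_monotoneOn {G w : ℝ → ℝ} {a x : ℝ} (hax : a ≤ x)
    (hG : MonotoneOn G (Ici a)) (hw : ∀ t ∈ Ioi a, 0 ≤ w t)
    (hGw : IntegrableOn (fun t => G t * w t) (Ioi a)) (hwi : IntegrableOn w (Ioi a)) :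
    (∫ t in Ioc a x, G t * w t) * ∫ t in Ioi a, w t
      ≤ (∫ t in Ioi a, G t * w t) * ∫ t in Ioc a x, w t := by
  have hIoc_sub : Ioc a x ⊆ Ioi a := Ioc_subset_Ioi_self
  have hIoi_sub : Ioi x ⊆ Ioi a := Ioi_subset_Ioi hax
  have hx : x ∈ Ici a := hax
  -- Split `(a, ∞)` at `x`: the value `G x` separates the means of `G` over the two pieces.
  rw [← Ioc_union_Ioi_eq_Ioi hax, setIntegral_union Ioc_disjoint_Ioi_same measurableSet_Ioi
      (hGw.mono_set hIoc_sub) (hGw.mono_set hIoi_sub),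
    setIntegral_union Ioc_disjoint_Ioi_same measurableSet_Ioi (hwi.mono_set hIoc_sub)
      (hwi.mono_set hIoi_sub)]
  have hle : ∫ t in Ioc a x, G t * w t ≤ G x * ∫ t in Ioc a x, w t := by
    rw [← integral_const_mul]
    refine setIntegral_mono_on (hGw.mono_set hIoc_sub) ((hwi.mono_set hIoc_sub).const_mul _)
      measurableSet_Ioc fun t ht => ?_
    exact mul_le_mul_of_nonneg_right (hG (Ioc_subset_Icc_self ht).1 hx ht.2) (hw t (hIoc_sub ht))
  have hge : G x * ∫ t in Ioi x, w t ≤ ∫ t in Ioi x, G t * w t := by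
    rw [← integral_const_mul]
    refine setIntegral_mono_on ((hwi.mono_set hIoi_sub).const_mul _) (hGw.mono_set hIoi_sub)
      measurableSet_Ioi fun t ht => ?_
    exact mul_le_mul_of_nonneg_right (hG hx (mem_Ici.2 (hax.trans ht.le)) ht.le)
      (hw t (hIoi_sub ht))
  have hwIoc : 0 ≤ ∫ t in Ioc a x, w t :=
    setIntegral_nonneg measurableSet_Ioc fun t ht => hw t (hIoc_sub ht)
  have hwIoi : 0 ≤ ∫ t in Ioi x, w t :=
    setIntegral_nonneg measurableSet_Ioi fun t ht => hw t (hIoi_sub ht)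
  nlinarith [mul_le_mul_of_nonneg_right hle hwIoi, mul_le_mul_of_nonneg_right hge hwIoc]

lemma LipschitzOnWith.monotoneOn_mul_add {f : ℝ → ℝ} {K : NNReal} {s : Set ℝ}
    (hf : LipschitzOnWith K f s) : MonotoneOn (fun t => K * t + f t) s := by
  intro a ha b hb hab
  have := hf.le_add_mul ha hb
  rw [dist_comm, Real.dist_eq, abs_of_nonneg (sub_nonneg.2 hab)] at this
  linarith

lemma LipschitzOnWith.integrableOn_mul_stdPhi {f : ℝ → ℝ} {K : NNReal}
    (hf : LipschitzOnWith K f (Ici 0)) : IntegrableOn (fun t => f t * stdPhi t) (Ioi 0) := by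
  refine Integrable.mono' ((integrable_stdPhi.const_mul |f 0|).add
      (integrable_mul_stdPhi.const_mul K)).integrableOn
    (((hf.continuousOn.mono Ioi_subset_Ici_self).mul
      continuous_stdPhi.continuousOn).aestronglyMeasurable measurableSet_Ioi)
    (ae_restrict_of_forall_mem measurableSet_Ioi fun t ht => ?_)
  have hgrowth : |f t| ≤ |f 0| + K * t := by
    have := hf.dist_le_mul t (mem_Ici.2 (le_of_lt ht)) 0 (mem_Ici.2 le_rfl)
    rw [Real.dist_eq, Real.dist_eq, sub_zero, abs_of_pos (show (0 : ℝ) < t from ht)] at this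
    linarith [abs_sub_abs_le_abs_sub (f t) (f 0)]
  show ‖f t * stdPhi t‖ ≤ |f 0| * stdPhi t + K * (t * stdPhi t)
  rw [norm_mul, Real.norm_eq_abs, Real.norm_eq_abs, abs_of_pos (stdPhi_pos t)]
  nlinarith [stdPhi_pos t]

lemma Ehn_neg (h : ℝ → ℝ) : Ehn (-h) = -Ehn h := by
  simp [Ehn, integral_neg]

lemma fh_neg (h : ℝ → ℝ) (x : ℝ) : fh (-h) x = -fh h x := by
  simp only [fh, Ehn_neg, Pi.neg_apply, neg_sub_neg, ← neg_sub (h _), neg_mul,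
    intervalIntegral.integral_neg, mul_neg]

lemma fh_mul_stdPhi {h : ℝ → ℝ} (hh : ContinuousOn h (Ici 0)) {x : ℝ} (hx : 0 ≤ x) :
    fh h x * stdPhi x = (∫ t in Ioc 0 x, h t * stdPhi t) - Ehn h * (stdCDF x - 1 / 2) := by
  have hint : IntervalIntegrable (fun t => h t * stdPhi t) volume 0 x :=
    ((hh.mono (by simp [uIcc_of_le hx, Icc_subset_Ici_self])).mul
      continuous_stdPhi.continuousOn).intervalIntegrable
  rw [fh, mul_comm, ← mul_assoc, mul_inv_cancel₀ (stdPhi_pos x).ne', one_mul]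
  simp_rw [sub_mul]
  rw [intervalIntegral.integral_sub hint ((continuous_stdPhi.intervalIntegrable 0 x).const_mul _),
    intervalIntegral.integral_const_mul, intervalIntegral_stdPhi,
    intervalIntegral.integral_of_le hx]

lemma fh_mul_stdPhi_le {h : ℝ → ℝ} {L : NNReal} (hh : LipschitzOnWith L h (Ici 0)) {x : ℝ}
    (hx : 0 ≤ x) : fh h x * stdPhi x ≤ L * (stdPhi x - √(2 / π) * (1 - stdCDF x)) := by
  have hint_h := hh.integrableOn_mul_stdPhi
  have hint_id : IntegrableOn (fun t => t * stdPhi t) (Ioi 0) := integrable_mul_stdPhi.integrableOn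
  have hint_G : IntegrableOn (fun t => (L * t + h t) * stdPhi t) (Ioi 0) := by
    simp_rw [add_mul, mul_assoc]
    exact (hint_id.const_mul (L : ℝ)).add hint_h
  have hcheb := integral_Ioc_mul_le_of_monotoneOn hx hh.monotoneOn_mul_add
    (fun t _ => (stdPhi_pos t).le) hint_G integrable_stdPhi.integrableOn
  have hG_Ioi : ∫ t in Ioi 0, (L * t + h t) * stdPhi t = L * stdPhi 0 + Ehn h / 2 := by
    simp_rw [add_mul, mul_assoc]
    rw [integral_add (hint_id.const_mul _) hint_h, integral_const_mul, integral_Ioi_mul_stdPhi,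
      Ehn_eq]
    ring
  have hG_Ioc : ∫ t in Ioc 0 x, (L * t + h t) * stdPhi t
      = L * (stdPhi 0 - stdPhi x) + ∫ t in Ioc 0 x, h t * stdPhi t := by
    simp_rw [add_mul, mul_assoc]
    rw [integral_add ((hint_id.mono_set Ioc_subset_Ioi_self).const_mul _)
        (hint_h.mono_set Ioc_subset_Ioi_self), integral_const_mul,
      ← intervalIntegral.integral_of_le hx, intervalIntegral_mul_stdPhi]
  have hΦ : ∫ t in Ioc 0 x, stdPhi t = stdCDF x - 1 / 2 := by
    rw [← intervalIntegral.integral_of_le hx, intervalIntegral_stdPhi]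
  rw [hG_Ioi, hG_Ioc, integral_Ioi_stdPhi, hΦ] at hcheb
  rw [fh_mul_stdPhi hh.continuousOn hx, sqrt_two_div_pi_eq]
  linarith

theorem stmt8 (h : ℝ → ℝ) (L : NNReal) (hh : LipschitzOnWith L h (Set.Ici 0)) :
    ∀ x : ℝ, 0 ≤ x →
      |fh h x| ≤ (L : ℝ) * (1 - Real.sqrt (2/Real.pi) * (1 - stdCDF x) / stdPhi x) ∧
      |fh h x| ≤ (L : ℝ) := by
  intro x hx
  have hφ := stdPhi_pos x
  have hlower := fh_mul_stdPhi_le hh.neg hx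
  rw [fh_neg, neg_mul] at hlower
  have habs := abs_le.2 ⟨neg_le.1 hlower, fh_mul_stdPhi_le hh hx⟩
  rw [abs_mul, abs_of_pos hφ, ← le_div_iff₀ hφ] at habs
  have hbound : |fh h x| ≤ L * (1 - √(2 / π) * (1 - stdCDF x) / stdPhi x) := by
    calc |fh h x| ≤ L * (stdPhi x - √(2 / π) * (1 - stdCDF x)) / stdPhi x := habs
      _ = L * (1 - √(2 / π) * (1 - stdCDF x) / stdPhi x) := by field_simp
  refine ⟨hbound, hbound.trans (mul_le_of_le_one_right L.coe_nonneg (sub_le_self _ ?_))⟩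
  exact div_nonneg (mul_nonneg (sqrt_nonneg _) (sub_nonneg.2 (stdCDF_le_one x))) hφ.le
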